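/- arXiv:1406.4002 — 4 statements merged into one kernel-verified Lean document; each statement's English description precedes it below -/
import Mathlib

section
/- Let p be a prime and let s = p^a, t = p^b with a > b ≥ 1, and let α and f be powers of p with f ≥ 1 satisfying α ≡ f (mod (s/t) + 1). Then α/f (or f/α, whichever is an integer) equals (s/t)^k for some even natural number k. -/
lemma key {p u N : ℕ} (hp : p.Prime) (hu : 1 ≤ u) (hN : N = p ^ u + 1) :
    ∀ m : ℕ, p ^ m ≡ 1 [MOD N] → ∃ k : ℕ, Even k ∧ m = u * k := by
  intro m hm
  have hu0 : 0 < u := hu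
  set q := m / u with hq
  set r := m % u with hr
  have hru : r < u := Nat.mod_lt _ hu0
  have hmeq : m = u * q + r := (Nat.div_add_mod m u).symm ▸ by omega
  have hNZ : ((p : ℤ) ^ u) ≡ -1 [ZMOD (N : ℤ)] := by
    rw [Int.modEq_iff_dvd]
    have : (-1 - (p : ℤ) ^ u) = -(N : ℤ) := by push_cast [hN]; ring
    simp [this]
  have h1 : ((p : ℤ)) ^ m ≡ 1 [ZMOD (N : ℤ)] := by
    have := Int.natCast_modEq_iff.mpr hm
    simpa using this
  have h2 : ((p : ℤ)) ^ m ≡ (-1) ^ q * (p : ℤ) ^ r [ZMOD (N : ℤ)] := by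
    calc ((p : ℤ)) ^ m = ((p : ℤ) ^ u) ^ q * (p : ℤ) ^ r := by
          rw [hmeq, pow_add, pow_mul]
      _ ≡ (-1) ^ q * (p : ℤ) ^ r [ZMOD (N : ℤ)] :=
          Int.ModEq.mul (Int.ModEq.pow q hNZ) Int.ModEq.rfl
  have h3 : ((-1 : ℤ)) ^ q * (p : ℤ) ^ r ≡ 1 [ZMOD (N : ℤ)] := h2.symm.trans h1
  have hp2 : 2 ≤ p := hp.two_le
  have hprN : p ^ r < N := by
    have : p ^ r < p ^ u := Nat.pow_lt_pow_right (by omega) hru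
    omega
  have hprZ : (p : ℤ) ^ r < (N : ℤ) := by exact_mod_cast hprN
  have hpr1 : 1 ≤ (p : ℤ) ^ r := one_le_pow₀ (by exact_mod_cast Nat.one_le_of_lt hp2)
  rcases Nat.even_or_odd q with hqe | hqo
  · -- even: p^r ≡ 1, force r = 0
    have h4 : (p : ℤ) ^ r ≡ 1 [ZMOD (N : ℤ)] := by
      rwa [hqe.neg_one_pow, one_mul] at h3
    have hdvd : (N : ℤ) ∣ (p : ℤ) ^ r - 1 := (Int.modEq_iff_dvd.mp h4.symm)
    have hr0 : (p : ℤ) ^ r = 1 := by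
      rcases eq_or_lt_of_le hpr1 with h | h
      · exact h.symm
      · exfalso
        have := Int.le_of_dvd (by omega) hdvd
        omega
    have : r = 0 := by
      by_contra hrne
      have : (p:ℤ) ^ r ≥ (p:ℤ) ^ 1 := pow_le_pow_right₀ (by exact_mod_cast Nat.one_le_of_lt hp2) (by omega)
      simp at this
      omega
    exact ⟨q, hqe, by omega⟩
  · exfalso
    have h4 : -((p : ℤ) ^ r) ≡ 1 [ZMOD (N : ℤ)] := by
      rwa [hqo.neg_one_pow, neg_one_mul] at h3
    have hdvd : (N : ℤ) ∣ (p : ℤ) ^ r + 1 := by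
      have := Int.modEq_iff_dvd.mp h4
      have e : (1 : ℤ) - -((p:ℤ)^r) = (p:ℤ)^r + 1 := by ring
      rwa [e] at this
    have hlt : (p : ℤ) ^ r + 1 < (N : ℤ) := by
      have : p ^ r < p ^ (u) := Nat.pow_lt_pow_right (by omega) hru
      have h2' : p ^ r + 1 < N := by
        rcases Nat.lt_or_ge (r+1) u with h | h
        · have : p ^ (r+1) ≤ p ^ u := Nat.pow_le_pow_right (by omega) (by omega)
          have : p ^ r * 2 ≤ p ^ (r+1) := by
            rw [pow_succ]; exact Nat.mul_le_mul_left _ hp2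
          omega
        · -- r + 1 = u, then p^r + 1 < p^u + 1 since p^r < p^u
          omega
      exact_mod_cast h2'
    have := Int.le_of_dvd (by omega) hdvd
    omega

lemma main_half {p u v w : ℕ} (hp : p.Prime) (hu : 1 ≤ u) (hwv : w ≤ v)
    (hcong : p ^ v ≡ p ^ w [MOD p ^ u + 1]) :
    ∃ k : ℕ, Even k ∧ p ^ v = p ^ w * (p ^ u) ^ k := by
  set N := p ^ u + 1 with hN
  have hcop : Nat.Coprime N (p ^ w) := by
    apply Nat.Coprime.pow_right
    rw [Nat.coprime_comm]
    rw [Nat.Prime.coprime_iff_not_dvd hp]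
    intro hdvd
    have h1 : p ∣ p ^ u := dvd_pow_self p (by omega)
    have h2 : p ∣ 1 := by
      have := Nat.dvd_sub hdvd h1
      simpa [hN] using this
    exact Nat.Prime.one_lt hp |>.ne' (Nat.eq_one_of_dvd_one h2) |>.elim
  have hsplit : p ^ v = p ^ w * p ^ (v - w) := by
    rw [← pow_add]; congr 1; omega
  have hcong2 : p ^ w * p ^ (v - w) ≡ p ^ w * 1 [MOD N] := by
    simpa [← hsplit] using hcong
  have hcong3 : p ^ (v - w) ≡ 1 [MOD N] := by
    have := Nat.ModEq.cancel_left_of_coprime (c := p ^ w)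
      (by simpa [Nat.Coprime] using hcop) hcong2
    exact this
  obtain ⟨k, hk, hmk⟩ := key hp hu hN (v - w) hcong3
  exact ⟨k, hk, by rw [hsplit, hmk, pow_mul]⟩

/-- Arithmetic core of the Transfer theorem: let `p` be a prime, `s = p^a`,
`t = p^b` with `a > b ≥ 1`, and let `α = p^v`, `f = p^w` be powers of `p` with
`α ≡ f (mod (s/t) + 1)`.  Then the quotient of `α` and `f` (whichever is an
integer) equals `(s/t)^k` for some even natural number `k`. -/
theorem transfer_arithmetic {p a b v w : ℕ} (hp : p.Prime) (hab : b < a) (hb : 1 ≤ b)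
    (hcong : p ^ v ≡ p ^ w [MOD p ^ (a - b) + 1]) :
    ∃ k : ℕ, Even k ∧
      (p ^ v = p ^ w * (p ^ (a - b)) ^ k ∨ p ^ w = p ^ v * (p ^ (a - b)) ^ k) := by

  have hu : 1 ≤ a - b := by omega
  rcases le_total w v with h | h
  · obtain ⟨k, hk, he⟩ := main_half hp hu h hcong
    exact ⟨k, hk, Or.inl he⟩
  · obtain ⟨k, hk, he⟩ := main_half hp hu h hcong.symm
    exact ⟨k, hk, Or.inr he⟩
end

section
/- Let G be a finite metabelian group, N a normal subgroup of G, and B an abelian subgroup of N of maximal order among abelian subgroups of N. Then there exists a normal abelian subgroup C of G with C contained in the normal closure of B in G (hence C ≤ N) and |C| = |B|. -/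
/-!
Induct on the normal subgroup `W`, looking for a normal abelian subgroup of `G` whose order is
the largest order of an abelian subgroup of `W`. If some abelian `A ≤ W` of that order has
normal closure properly inside `W`, recurse there. Otherwise `W = A M` for every such `A`,
where `M = G' ∩ W` is normal and abelian; fix one such `B` and some `g ∈ G`.
Put `S = B ∩ g⁻¹ B g`, `V = B ∩ M` and `D = C_M(S)`. The map `b ↦ ⁅g, b⁆` sends `B`
into `D` and its fibres modulo `V` lie in cosets of `S`, so `|B : S| ≤ |D : V|` and the
abelian subgroup `S D` of `W` has order at least `|B|`. Then `W = S D M = B M` forces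
`|S D ∩ M| = |V|`, so `D = V ≤ B`, and `g b g⁻¹ = ⁅g, b⁆ b ∈ B`: `B` is normal.
-/

open Subgroup
open scoped commutatorElement

namespace Subgroup

variable {G : Type*} [Group G]

theorem le_centralizer_self_iff {A : Subgroup G} :
    A ≤ centralizer A ↔ ∀ x ∈ A, ∀ y ∈ A, x * y = y * x :=
  ⟨fun h x hx _ hy => mem_centralizer_iff.mp (h hy) x hx,
    fun h y hy => mem_centralizer_iff.mpr fun x hx => h x hx y hy⟩

theorem sup_le_centralizer_sup {H K : Subgroup G} (hH : H ≤ centralizer H)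
    (hK : K ≤ centralizer K) (hHK : H ≤ centralizer K) :
    H ⊔ K ≤ centralizer (H ⊔ K : Subgroup G) := by
  have hKH : K ≤ centralizer H := le_centralizer_iff.mp hHK
  exact le_centralizer_iff.mp (sup_le (le_centralizer_iff.mp (sup_le hH hKH))
    (le_centralizer_iff.mp (sup_le hHK hK)))

theorem card_eq_relIndex_mul_card {H K : Subgroup G} (h : H ≤ K) :
    Nat.card K = H.relIndex K * Nat.card H := by
  rw [← relIndex_bot_left, ← relIndex_bot_left, mul_comm]
  exact (relIndex_mul_relIndex _ _ _ bot_le h).symm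

theorem card_sup_mul_card_inf_of_normal (H K : Subgroup G) [K.Normal] :
    Nat.card (H ⊔ K : Subgroup G) * Nat.card (H ⊓ K : Subgroup G) =
      Nat.card H * Nat.card K := by
  rw [card_eq_relIndex_mul_card (le_sup_right : K ≤ H ⊔ K),
    card_eq_relIndex_mul_card (inf_le_left : H ⊓ K ≤ H), relIndex_sup_right, inf_relIndex_left]
  ring

theorem card_mul_card_le_card_sup_mul_card_inf [Finite G] (H K : Subgroup G) :
    Nat.card H * Nat.card K ≤
      Nat.card (H ⊔ K : Subgroup G) * Nat.card (H ⊓ K : Subgroup G) := by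
  rw [card_eq_relIndex_mul_card (le_sup_right : K ≤ H ⊔ K),
    card_eq_relIndex_mul_card (inf_le_left : H ⊓ K ≤ H), inf_relIndex_left, mul_right_comm]
  gcongr
  exact relIndex_le_of_le_right le_sup_left index_ne_zero_of_finite

theorem relIndex_le_relIndex_of_inv_mul_mem {G' : Type*} [Group G'] [Finite G']
    {K H : Subgroup G} {L D : Subgroup G'} (f : G → G') (hf : ∀ x ∈ H, f x ∈ D)
    (hfib : ∀ x ∈ H, ∀ y ∈ H, (f x)⁻¹ * f y ∈ L → x⁻¹ * y ∈ K) :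
    K.relIndex H ≤ L.relIndex D := by
  let F : H ⧸ K.subgroupOf H → D ⧸ L.subgroupOf D :=
    fun q => (⟨f q.out, hf _ q.out.2⟩ : D)
  refine Nat.card_le_card_of_injective F fun p q hpq => ?_
  rw [← p.out_eq, ← q.out_eq, QuotientGroup.eq, mem_subgroupOf]
  exact hfib _ p.out.2 _ q.out.2 (by simpa [F, QuotientGroup.eq, mem_subgroupOf] using hpq)

theorem card_le_card_sup_of_relIndex_le [Finite G] {S B V D : Subgroup G} (hSB : S ≤ B)
    (hVD : V ≤ D) (hSD : S ⊓ D ≤ V) (h : S.relIndex B ≤ V.relIndex D) :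
    Nat.card B ≤ Nat.card (S ⊔ D : Subgroup G) := by
  refine Nat.le_of_mul_le_mul_right ?_ (Nat.card_pos (α := V))
  calc Nat.card B * Nat.card V = S.relIndex B * Nat.card V * Nat.card S := by
        rw [card_eq_relIndex_mul_card hSB]; ring
    _ ≤ V.relIndex D * Nat.card V * Nat.card S := by gcongr
    _ = Nat.card S * Nat.card D := by rw [← card_eq_relIndex_mul_card hVD, mul_comm]
    _ ≤ Nat.card (S ⊔ D : Subgroup G) * Nat.card (S ⊓ D : Subgroup G) :=
        card_mul_card_le_card_sup_mul_card_inf S D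
    _ ≤ Nat.card (S ⊔ D : Subgroup G) * Nat.card V := by gcongr; exact card_le_of_le hSD

theorem commutatorElement_mem_commutator_inf {W : Subgroup G} [W.Normal] (g : G) {b : G}
    (hb : b ∈ W) : ⁅g, b⁆ ∈ _root_.commutator G ⊓ W := by
  rw [_root_.commutator_def]
  exact le_inf (commutator_mono le_rfl le_top) (commutator_le_right ⊤ W)
    (commutator_mem_commutator (mem_top g) hb)

theorem normalClosure_le_sup_commutator_inf {Y W : Subgroup G} [W.Normal] (hYW : Y ≤ W) :
    normalClosure (Y : Set G) ≤ Y ⊔ (_root_.commutator G ⊓ W) := by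
  refine closure_le _ |>.mpr fun x hx => ?_
  obtain ⟨y, hy, hyx⟩ := Group.mem_conjugatesOfSet_iff.mp hx
  obtain ⟨c, rfl⟩ := isConj_iff.mp hyx
  have : c * y * c⁻¹ = ⁅c, y⁆ * y := by group
  simpa [this] using
    mul_mem (mem_sup_right (commutatorElement_mem_commutator_inf c (hYW hy))) (mem_sup_left hy)

theorem card_inf_eq_card_inf_of_sup_eq [Finite G] {H K M : Subgroup G} [M.Normal]
    (hsup : H ⊔ M = K ⊔ M) (hcard : Nat.card H = Nat.card K) :
    Nat.card (H ⊓ M : Subgroup G) = Nat.card (K ⊓ M : Subgroup G) := by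
  refine Nat.eq_of_mul_eq_mul_left (Nat.card_pos (α := (H ⊔ M : Subgroup G))) ?_
  rw [card_sup_mul_card_inf_of_normal, hsup, card_sup_mul_card_inf_of_normal, hcard]

end Subgroup

section LargestAbelian

variable {G : Type*} [Group G]

theorem commute_commutatorElement {g x b : G} (hxb : Commute x b) (hcb : Commute ⁅g, x⁆ b)
    (hcd : Commute ⁅g, x⁆ ⁅g, b⁆) : Commute x ⁅g, b⁆ := by
  have hconj : Commute (⁅g, x⁆ * x) (⁅g, b⁆ * b) := by
    simpa [commutatorElement_def, mul_assoc] using hxb.conj g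
  refine mul_right_cancel (b := b) (mul_left_cancel (a := ⁅g, x⁆) ?_)
  calc ⁅g, x⁆ * (x * ⁅g, b⁆ * b)
    _ = ⁅g, x⁆ * x * (⁅g, b⁆ * b) := by simp only [mul_assoc]
    _ = ⁅g, b⁆ * (b * ⁅g, x⁆) * x := by rw [hconj.eq]; simp only [mul_assoc]
    _ = ⁅g, x⁆ * ⁅g, b⁆ * (x * b) := by
        rw [← hcb.eq, ← mul_assoc, ← hcd.eq, hxb.eq]; simp only [mul_assoc]
    _ = ⁅g, x⁆ * (⁅g, b⁆ * x * b) := by simp only [mul_assoc]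

/-- Largest in order among the abelian subgroups of `W`, not merely maximal under inclusion. -/
structure IsLargestAbelian (W A : Subgroup G) : Prop where
  le : A ≤ W
  le_centralizer : A ≤ centralizer A
  card_le : ∀ A' ≤ W, A' ≤ centralizer A' → Nat.card A' ≤ Nat.card A

theorem exists_isLargestAbelian [Finite G] (W : Subgroup G) : ∃ A, IsLargestAbelian W A := by
  obtain ⟨A, ⟨hAW, hAab⟩, hmax⟩ :=
    Set.exists_max_image {A : Subgroup G | A ≤ W ∧ A ≤ centralizer A} (fun A => Nat.card A)
      (Set.toFinite _) ⟨⊥, bot_le, bot_le⟩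
  exact ⟨A, hAW, hAab, fun A' hA'W hA'ab => hmax A' ⟨hA'W, hA'ab⟩⟩

namespace IsLargestAbelian

variable {W A B : Subgroup G}

theorem of_card_le (hB : IsLargestAbelian W B) (hAW : A ≤ W) (hAab : A ≤ centralizer A)
    (hcard : Nat.card B ≤ Nat.card A) : IsLargestAbelian W A :=
  ⟨hAW, hAab, fun A' hA'W hA'ab => (hB.card_le A' hA'W hA'ab).trans hcard⟩

theorem conj_mem [Finite G] {M : Subgroup G} [M.Normal] (hB : IsLargestAbelian W B)
    (hMab : M ≤ centralizer M) (hMW : M ≤ W) (hsup : ∀ A, IsLargestAbelian W A → A ⊔ M = W)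
    {g : G} (hg : ∀ b ∈ B, ⁅g, b⁆ ∈ M) {b : G} (hb : b ∈ B) : g * b * g⁻¹ ∈ B := by
  set S := B ⊓ B.comap (MulAut.conj g).toMonoidHom
  set D := M ⊓ centralizer S
  have hSB : S ≤ B := inf_le_left
  have hcommS : ∀ s ∈ S, ⁅g, s⁆ ∈ B := fun s hs => by
    obtain ⟨hsB, hgs⟩ := mem_inf.mp hs
    simpa [commutatorElement_def] using mul_mem (mem_comap.mp hgs) (inv_mem hsB)
  have hcommD : ∀ x ∈ B, ⁅g, x⁆ ∈ D := fun x hx =>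
    mem_inf.mpr ⟨hg x hx, mem_centralizer_iff.mpr fun s hs =>
      (commute_commutatorElement (hB.le_centralizer hx s (hSB hs))
        (hB.le_centralizer hx _ (hcommS s hs)) (hMab (hg x hx) _ (hg s (hSB hs)))).eq⟩
  have hVD : B ⊓ M ≤ D :=
    le_inf inf_le_right ((inf_le_left.trans hB.le_centralizer).trans (centralizer_le hSB))
  have hindex : S.relIndex B ≤ (B ⊓ M).relIndex D := by
    refine relIndex_le_relIndex_of_inv_mul_mem (⁅g, ·⁆) hcommD fun x hx y hy hxy => ?_
    refine mem_inf.mpr ⟨mul_mem (inv_mem hx) hy, mem_comap.mpr ?_⟩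
    have : g * (x⁻¹ * y) * g⁻¹ = x⁻¹ * (⁅g, x⁆⁻¹ * ⁅g, y⁆) * y := by group
    simpa [this] using mul_mem (mul_mem (inv_mem hx) (mem_inf.mp hxy).1) hy
  have hX : IsLargestAbelian W (S ⊔ D) := by
    refine hB.of_card_le (sup_le (hSB.trans hB.le) (inf_le_left.trans hMW)) ?_
      (card_le_card_sup_of_relIndex_le hSB hVD (inf_le_inf hSB inf_le_left) hindex)
    exact sup_le_centralizer_sup ((hSB.trans hB.le_centralizer).trans (centralizer_le hSB))
      ((inf_le_left.trans hMab).trans (centralizer_le inf_le_left))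
      (le_centralizer_iff.mp inf_le_right)
  have hcard : Nat.card (S ⊔ D : Subgroup G) = Nat.card B :=
    le_antisymm (hB.card_le _ hX.le hX.le_centralizer) (hX.card_le _ hB.le hB.le_centralizer)
  have hDV : B ⊓ M = D := by
    refine eq_of_le_of_card_ge hVD ?_
    rw [← card_inf_eq_card_inf_of_sup_eq ((hsup _ hX).trans (hsup _ hB).symm) hcard]
    exact card_le_of_le (le_inf le_sup_right inf_le_left)
  have : g * b * g⁻¹ = ⁅g, b⁆ * b := by group
  rw [this]
  exact mul_mem (mem_inf.mp (hDV ▸ hcommD b hb)).1 hb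

end IsLargestAbelian

theorem exists_normal_isLargestAbelian [Finite G]
    (hmeta : _root_.commutator G ≤ centralizer (_root_.commutator G)) (W : Subgroup G)
    (hW : W.Normal) : ∃ X : Subgroup G, X.Normal ∧ IsLargestAbelian W X := by
  induction W using WellFoundedLT.induction with
  | _ W ih =>
  by_cases hsmall : ∃ A, IsLargestAbelian W A ∧ normalClosure (A : Set G) < W
  · obtain ⟨A, hA, hlt⟩ := hsmall
    obtain ⟨X, hXn, hX⟩ := ih _ hlt normalClosure_normal
    exact ⟨X, hXn, hA.of_card_le (hX.le.trans hlt.le) hX.le_centralizer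
      (hX.card_le A le_normalClosure hA.le_centralizer)⟩
  · have hsup (A) (hA : IsLargestAbelian W A) : A ⊔ (_root_.commutator G ⊓ W) = W := by
      have hncl : normalClosure (A : Set G) = W :=
        (normalClosure_le_normal hA.le).eq_of_not_lt fun hlt => hsmall ⟨A, hA, hlt⟩
      exact le_antisymm (sup_le hA.le inf_le_right)
        (hncl.symm.le.trans (normalClosure_le_sup_commutator_inf hA.le))
    obtain ⟨B, hB⟩ := exists_isLargestAbelian W
    refine ⟨B, ⟨fun b hb g => hB.conj_mem ?_ inf_le_right hsup
      (fun b hb => commutatorElement_mem_commutator_inf g (hB.le hb)) hb⟩, hB⟩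
    exact (inf_le_left.trans hmeta).trans (centralizer_le inf_le_left)

end LargestAbelian

/-- (Gillam / Mann, after Theorem `metalemma`.)  Let `G` be a finite metabelian group,
`N` a normal subgroup of `G`, and `B` an abelian subgroup of `N` of maximal order among
abelian subgroups of `N`.  Then `G` contains a normal abelian subgroup `C` contained in
the normal closure of `B` in `G` with `|C| = |B|`. -/
theorem exists_normal_abelian_subgroup_of_metabelian
    {G : Type*} [Group G] [Finite G]
    (hmeta : ∀ x ∈ commutator G, ∀ y ∈ commutator G, x * y = y * x)
    (N : Subgroup G) (hN : N.Normal)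
    (B : Subgroup G) (hBN : B ≤ N)
    (hBab : ∀ x ∈ B, ∀ y ∈ B, x * y = y * x)
    (hBmax : ∀ A : Subgroup G, A ≤ N → (∀ x ∈ A, ∀ y ∈ A, x * y = y * x) →
      Nat.card A ≤ Nat.card B) :
    ∃ C : Subgroup G, C.Normal ∧ (∀ x ∈ C, ∀ y ∈ C, x * y = y * x) ∧
      C ≤ Subgroup.normalClosure (B : Set G) ∧ Nat.card C = Nat.card B := by
  obtain ⟨X, hXn, hX⟩ := exists_normal_isLargestAbelian (le_centralizer_self_iff.mpr hmeta)
    (normalClosure (B : Set G)) normalClosure_normal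
  have hXab := le_centralizer_self_iff.mp hX.le_centralizer
  have hXN : X ≤ N := hX.le.trans (normalClosure_le_normal (N := N) hBN)
  exact ⟨X, hXn, hXab, hX.le, le_antisymm (hBmax X hXN hXab)
    (hX.card_le B le_normalClosure (le_centralizer_self_iff.mpr hBab))⟩
end

section
/- Let G be a group of order s^2 and G_1, …, G_r (r ≥ 3) subgroups each of order s with G_i·G_j = G for all i ≠ j (a partial congruence partition). If G_1 and G_2 are both normal in G, then G is isomorphic to G_1 × G_2, and all components G_1, …, G_r are pairwise isomorphic. -/
open scoped Pointwise

section Aux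

variable {G : Type*} [Group G] [Finite G]

lemma pcp_isComplement' {H K : Subgroup G} {s : ℕ}
    (hH : Nat.card H = s) (hK : Nat.card K = s) (hG : Nat.card G = s ^ 2)
    (hmul : (H : Set G) * (K : Set G) = Set.univ) :
    H.IsComplement' K := by
  refine (Nat.bijective_iff_surjective_and_card _).mpr ⟨?_, ?_⟩
  · intro g
    obtain ⟨h, hh, k, hk, hg⟩ := Set.eq_univ_iff_forall.mp hmul g
    exact ⟨(⟨h, hh⟩, ⟨k, hk⟩), hg⟩
  · show Nat.card (H × K) = Nat.card G
    rw [Nat.card_prod, hH, hK, hG, sq]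

/-- A subgroup of order `s`, disjoint from a normal subgroup of order `s` in a group of
order `s^2`, is isomorphic to the quotient by the normal subgroup. -/
noncomputable def pcp_equiv_quotient {H K : Subgroup G} [K.Normal] {s : ℕ} (hs : 0 < s)
    (hH : Nat.card H = s) (hK : Nat.card K = s) (hG : Nat.card G = s ^ 2)
    (hdis : Disjoint H K) : H ≃* G ⧸ K := by
  have hq : Nat.card (G ⧸ K) = s := by
    have := Subgroup.card_mul_index K
    rw [hK, hG, sq] at this
    have : K.index = s := by
      have := Nat.eq_of_mul_eq_mul_left hs this
      exact this
    simpa [Subgroup.index] using this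
  refine MulEquiv.ofBijective ((QuotientGroup.mk' K).comp H.subtype) ?_
  refine (Nat.bijective_iff_injective_and_card _).mpr ⟨?_, by rw [hH, hq]⟩
  rw [← MonoidHom.ker_eq_bot_iff, eq_bot_iff]
  rintro ⟨x, hx⟩ hker
  have hxK : x ∈ K := (QuotientGroup.eq_one_iff x).mp hker
  have : x ∈ (⊥ : Subgroup G) := hdis.le_bot ⟨hx, hxK⟩
  simpa [Subgroup.mem_bot] using this

end Aux

/-- (Sprague.)  Let `G` be a group of order `s^2` with subgroups `G_1, …, G_r`
(`r ≥ 3`) each of order `s` such that `G_i · G_j = G` for all `i ≠ j` (a partial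
congruence partition).  If `G_1` and `G_2` are both normal in `G`, then
`G ≅ G_1 × G_2` and all the components `G_i` are pairwise isomorphic. -/
theorem pcp_two_normal_components {G : Type*} [Group G] [Finite G]
    {s r : ℕ} (hs : 2 ≤ s) (hr : 3 ≤ r) (hcard : Nat.card G = s ^ 2)
    (Gs : Fin r → Subgroup G)
    (hcards : ∀ i, Nat.card (Gs i) = s)
    (hprod : ∀ i j, i ≠ j → (Gs i : Set G) * (Gs j : Set G) = Set.univ)
    (h0 : (Gs ⟨0, by omega⟩).Normal) (h1 : (Gs ⟨1, by omega⟩).Normal) :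
    Nonempty (G ≃* (Gs ⟨0, by omega⟩) × (Gs ⟨1, by omega⟩)) ∧
      ∀ i j, Nonempty ((Gs i) ≃* (Gs j)) := by
  have hspos : 0 < s := by omega
  set i0 : Fin r := ⟨0, by omega⟩
  set i1 : Fin r := ⟨1, by omega⟩
  set i2 : Fin r := ⟨2, by omega⟩
  have hcompl : ∀ i j, i ≠ j → (Gs i).IsComplement' (Gs j) := fun i j hij =>
    pcp_isComplement' (hcards i) (hcards j) hcard (hprod i j hij)
  have hdis : ∀ i j, i ≠ j → Disjoint (Gs i) (Gs j) := fun i j hij =>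
    (hcompl i j hij).disjoint
  have h01 : i0 ≠ i1 := by simp [i0, i1, Fin.ext_iff]
  constructor
  · -- G ≅ G₀ × G₁
    have hcomm : ∀ x y : G, x ∈ Gs i0 → y ∈ Gs i1 → Commute x y :=
      Subgroup.commute_of_normal_of_disjoint _ _ h0 h1 (hdis i0 i1 h01)
    let f : (Gs i0) × (Gs i1) →* G :=
      { toFun := fun p => (p.1 : G) * (p.2 : G)
        map_one' := by simp
        map_mul' := by
          rintro ⟨⟨a, ha⟩, ⟨b, hb⟩⟩ ⟨⟨c, hc⟩, ⟨d, hd⟩⟩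
          have : Commute b c := hcomm c b hc hb |>.symm
          simp only [Prod.fst_mul, Prod.snd_mul, Subgroup.coe_mul]
          rw [mul_assoc a c, ← mul_assoc c b d, ← this.eq, mul_assoc b c d, ← mul_assoc a b] }
    have hbij : Function.Bijective f := hcompl i0 i1 h01
    exact ⟨(MulEquiv.ofBijective f hbij).symm⟩
  · -- pairwise isomorphic
    have key : ∀ i, Nonempty ((Gs i) ≃* G ⧸ Gs i0) := by
      intro i
      by_cases hi : i = i0
      · subst hi
        have e0 : (Gs i0) ≃* G ⧸ Gs i1 :=
          pcp_equiv_quotient hspos (hcards i0) (hcards i1) hcard (hdis i0 i1 h01)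
        have h20 : i2 ≠ i0 := by simp [i0, i2, Fin.ext_iff]
        have h21 : i2 ≠ i1 := by simp [i1, i2, Fin.ext_iff]
        have e2a : (Gs i2) ≃* G ⧸ Gs i1 :=
          pcp_equiv_quotient hspos (hcards i2) (hcards i1) hcard (hdis i2 i1 h21)
        have e2b : (Gs i2) ≃* G ⧸ Gs i0 :=
          pcp_equiv_quotient hspos (hcards i2) (hcards i0) hcard (hdis i2 i0 h20)
        exact ⟨e0.trans (e2a.symm.trans e2b)⟩
      · exact ⟨pcp_equiv_quotient hspos (hcards i) (hcards i0) hcard (hdis i i0 hi)⟩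
    intro i j
    obtain ⟨ei⟩ := key i
    obtain ⟨ej⟩ := key j
    exact ⟨ei.trans ej.symm⟩
end

section
/- Let G be a finite group of order s^2 with subgroups G_1,…,G_r (r ≥ 3) of order s satisfying G_iG_j = G for i ≠ j, and let N be a normal subgroup of G such that N = (G_i ∩ N)(G_j ∩ N) for all distinct i, j. Then |N| is a perfect square, say n^2, each G_i ∩ N has order n, and the subgroups (G_iN)/N of G/N form a partial congruence partition: they have order s/n and pairwise products equal to G/N. -/
open scoped Pointwise

/-- Let `G` be a finite group of order `s^2` with a partial congruence partition
`G_1, …, G_r` (`r ≥ 3`, each of order `s`, pairwise products equal to `G`), and let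
`N ⊴ G` satisfy `N = (G_i ∩ N)(G_j ∩ N)` for all `i ≠ j`.  Then `|N|` is a perfect
square `n^2`, each `G_i ∩ N` has order `n`, and the images `(G_i N)/N` in `G/N`
form a partial congruence partition: they have order `s/n` and pairwise products
equal to `G/N`. -/
theorem pcp_factorizing_normal_subgroup {G : Type*} [Group G] [Finite G]
    {s r : ℕ} (hs : 2 ≤ s) (hr : 3 ≤ r) (hcard : Nat.card G = s ^ 2)
    (Gs : Fin r → Subgroup G)
    (hcards : ∀ i, Nat.card (Gs i) = s)
    (hprod : ∀ i j, i ≠ j → (Gs i : Set G) * (Gs j : Set G) = Set.univ)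
    (N : Subgroup G) (hN : N.Normal)
    (hfac : ∀ i j, i ≠ j →
      ((Gs i ⊓ N : Subgroup G) : Set G) * ((Gs j ⊓ N : Subgroup G) : Set G) = (N : Set G)) :
    ∃ n : ℕ, Nat.card N = n ^ 2 ∧
      (∀ i, Nat.card (Gs i ⊓ N : Subgroup G) = n) ∧
      (∀ i, Nat.card ((Gs i).map (QuotientGroup.mk' N)) = s / n) ∧
      (∀ i j, i ≠ j →
        ((Gs i).map (QuotientGroup.mk' N) : Set (G ⧸ N)) *
          ((Gs j).map (QuotientGroup.mk' N) : Set (G ⧸ N)) = Set.univ) := by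
  classical
  -- pairwise disjointness of the `Gs i`
  have hdisj : ∀ i j, i ≠ j → Disjoint (Gs i) (Gs j) := by
    intro i j hij
    have hcompl : Subgroup.IsComplement' (Gs i) (Gs j) := by
      rw [Subgroup.isComplement'_def, Subgroup.IsComplement,
        Nat.bijective_iff_surjective_and_card]
      constructor
      · intro g
        have hg : g ∈ ((Gs i : Set G) * (Gs j : Set G)) := by
          rw [hprod i j hij]; trivial
        obtain ⟨a, ha, b, hb, hab⟩ := hg
        exact ⟨(⟨a, ha⟩, ⟨b, hb⟩), hab⟩
      · simp only [Nat.card_prod, SetLike.coe_sort_coe, hcards, hcard, sq]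
    exact hcompl.disjoint
  set nc : Fin r → ℕ := fun i => Nat.card (Gs i ⊓ N : Subgroup G) with hnc
  have hpos : ∀ i, 0 < nc i := fun i => Nat.card_pos
  -- key counting identity
  have hAB : ∀ i j, i ≠ j → nc i * nc j = Nat.card N := by
    intro i j hij
    have hd : Disjoint (Gs i ⊓ N) (Gs j ⊓ N) :=
      (hdisj i j hij).mono inf_le_left inf_le_left
    have hinj := Subgroup.mul_injective_of_disjoint hd
    let f : (Gs i ⊓ N : Subgroup G) × (Gs j ⊓ N : Subgroup G) → N := fun p =>
      ⟨(p.1 : G) * (p.2 : G), N.mul_mem p.1.2.2 p.2.2.2⟩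
    have hbij : Function.Bijective f := by
      constructor
      · intro x y hxy
        exact hinj (Subtype.ext_iff.mp hxy)
      · rintro ⟨n, hn⟩
        have : n ∈ ((Gs i ⊓ N : Subgroup G) : Set G) * ((Gs j ⊓ N : Subgroup G) : Set G) := by
          rw [hfac i j hij]; exact hn
        obtain ⟨a, ha, b, hb, hab⟩ := this
        exact ⟨(⟨a, ha⟩, ⟨b, hb⟩), Subtype.ext hab⟩
    have := Nat.card_eq_of_bijective f hbij
    rwa [Nat.card_prod] at this
  -- all the `nc i` are equal
  have hkey : ∀ i j, nc i = nc j := by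
    intro i j
    rcases eq_or_ne i j with rfl | hij
    · rfl
    · have hex : ∃ k : Fin r, k ≠ i ∧ k ≠ j := by
        have hcard2 : ({i, j} : Finset (Fin r)).card < (Finset.univ : Finset (Fin r)).card := by
          have h1 : ({i, j} : Finset (Fin r)).card ≤ 2 := by
            apply le_trans (Finset.card_insert_le _ _)
            simp
          have h2 : (Finset.univ : Finset (Fin r)).card = r := by simp
          omega
        have hns : ¬ (Finset.univ : Finset (Fin r)) ⊆ {i, j} := fun hsub =>
          (Finset.card_le_card hsub).not_gt hcard2
        obtain ⟨k, hk⟩ := Finset.sdiff_nonempty.mpr hns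
        simp only [Finset.mem_sdiff, Finset.mem_insert, Finset.mem_singleton] at hk
        exact ⟨k, fun h => hk.2 (Or.inl h), fun h => hk.2 (Or.inr h)⟩
      obtain ⟨k, hki, hkj⟩ := hex
      have h1 := hAB i k hki.symm.symm.symm ▸ (hAB i k (fun h => hki (h.symm)))
      have h2 := hAB j k (fun h => hkj (h.symm))
      have h3 := hAB i k (fun h => hki (h.symm))
      have := h3.trans h2.symm
      exact Nat.eq_of_mul_eq_mul_right (hpos k) this
  have hi0 : (0 : ℕ) < r := by omega
  let i0 : Fin r := ⟨0, by omega⟩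
  let i1 : Fin r := ⟨1, by omega⟩
  refine ⟨nc i0, ?_, fun i => hkey i i0, ?_, ?_⟩
  · have h01 : i0 ≠ i1 := by simp [i0, i1, Fin.ext_iff]
    have := hAB i0 i1 h01
    rw [hkey i1 i0] at this
    rw [← this, sq]
  · intro i
    -- cardinality of the image in the quotient
    have hrange : (Gs i).map (QuotientGroup.mk' N) =
        ((QuotientGroup.mk' N).comp (Gs i).subtype).range := by
      rw [MonoidHom.range_comp, Subgroup.range_subtype]
    have hker : ((QuotientGroup.mk' N).comp (Gs i).subtype).ker = N.subgroupOf (Gs i) := by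
      rw [← MonoidHom.comap_ker, QuotientGroup.ker_mk']
      rfl
    have hequiv := QuotientGroup.quotientKerEquivRange ((QuotientGroup.mk' N).comp (Gs i).subtype)
    have hcardeq : Nat.card ((Gs i).map (QuotientGroup.mk' N)) =
        Nat.card ((Gs i) ⧸ (N.subgroupOf (Gs i))) := by
      rw [hrange, ← hker]
      exact (Nat.card_congr hequiv.toEquiv).symm
    have hsub : Nat.card (N.subgroupOf (Gs i)) = nc i := by
      rw [← Subgroup.inf_subgroupOf_left N (Gs i)]
      exact Nat.card_congr (Subgroup.subgroupOfEquivOfLe inf_le_left).toEquiv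
    have hlag := Subgroup.card_eq_card_quotient_mul_card_subgroup (N.subgroupOf (Gs i))
    rw [hcards i, hsub, hkey i i0] at hlag
    rw [hcardeq, hlag, Nat.mul_div_cancel _ (hpos i0)]
  · intro i j hij
    rw [Subgroup.coe_map, Subgroup.coe_map, ← Set.image_mul, hprod i j hij, Set.image_univ,
      Set.range_eq_univ.mpr (QuotientGroup.mk'_surjective N)]
end
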